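/- The Gaussian negative log-likelihood score ℓ(L, P) = (1/2)·tr(P S Pᵀ Lᵀ L) − ∑_{j=1}^p log L_{jj} is permutation invariant: for every p × p permutation matrix P and every symmetric positive semidefinite matrix S, the infimum of ℓ(L, P) over lower triangular matrices L with positive diagonal equals the infimum of ℓ(L, I) over the same set. -/

import Mathlib

open Matrix BigOperators

/-- Lower triangular matrices with strictly positive diagonal entries. -/
def LowerTriPos {p : ℕ} (L : Matrix (Fin p) (Fin p) ℝ) : Prop :=
  (∀ i j : Fin p, (i : ℕ) < (j : ℕ) → L i j = 0) ∧ (∀ i, 0 < L i i)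

/-- The Gaussian negative log-likelihood score
`ℓ(L,P) = (1/2)·tr(P S Pᵀ Lᵀ L) − ∑ log L_jj`. -/
noncomputable def nllScore {p : ℕ}
    (L P S : Matrix (Fin p) (Fin p) ℝ) : ℝ :=
  (1 / 2) * (P * S * Pᵀ * Lᵀ * L).trace - ∑ j, Real.log (L j j)

/-!
Writing `Ω = Pᵀ Lᵀ L P`, the score is `½ tr(S Ω) − ½ log det Ω`: it depends on `(L, P)` only
through the precision matrix `Ω`, since `det P = ±1` and `det L = ∏ L_jj`. By the Cholesky
factorization (for the reversed order of the variables), `L ↦ Lᵀ L` maps lower triangular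
matrices with positive diagonal onto the positive definite matrices, and conjugation by a
permutation matrix permutes the positive definite matrices. Hence for every `P` the set of
attained scores is the image of the positive definite cone under `Ω ↦ ½ tr(S Ω) − ½ log det Ω`.
-/

namespace Matrix

variable {n : Type*}

theorem image_submatrix_posDef {R : Type*} [Ring R] [PartialOrder R] [StarRing R] (e : n ≃ n) :
    (fun G : Matrix n n R => G.submatrix e e) '' {G | G.PosDef} = {G | G.PosDef} := by
  ext G
  refine ⟨?_, fun hG => ⟨G.submatrix e.symm e.symm, hG.submatrix e.symm.injective, by simp⟩⟩
  rintro ⟨G, hG, rfl⟩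
  exact hG.submatrix e.injective

variable [Fintype n]

theorem transpose_permMatrix_mul_mul_permMatrix {R : Type*} [Semiring R] [DecidableEq n]
    (σ : Equiv.Perm n) (G : Matrix n n R) :
    (σ.permMatrix R)ᵀ * G * σ.permMatrix R = G.submatrix σ.symm σ.symm := by
  rw [transpose_permMatrix, Equiv.Perm.permMatrix, Equiv.Perm.permMatrix,
    PEquiv.toMatrix_toPEquiv_mul, PEquiv.mul_toMatrix_toPEquiv]
  rfl

variable [LinearOrder n]

theorem IsLowerTriangular.diag_ne_zero {R : Type*} [CommRing R] {L : Matrix n n R}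
    (hL : L.IsLowerTriangular) (hdet : L.det ≠ 0) (i : n) : L i i ≠ 0 := fun h =>
  hdet (det_of_isLowerTriangular L hL ▸ Finset.prod_eq_zero (Finset.mem_univ i) h)

theorem PosDef.exists_isLowerTriangular_mul_transpose [WellFoundedLT n]
    [LocallyFiniteOrderBot n] {A : Matrix n n ℝ} (hA : A.PosDef) :
    ∃ M : Matrix n n ℝ, M.IsLowerTriangular ∧ (∀ i, 0 < M i i) ∧ M * Mᵀ = A := by
  set W := LDL.lower hA
  set d := LDL.diagEntries hA
  have hW : W.IsLowerTriangular :=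
    blockTriangular_inv_of_blockTriangular fun _ _ hij => LDL.lowerInv_triangular hA hij
  have hWdiag : ∀ i, W i i ≠ 0 := hW.diag_ne_zero
    (isUnit_nonsing_inv_det _ (isUnit_det_of_invertible (LDL.lowerInv hA))).ne_zero
  have hd : ∀ i, 0 < d i := by
    have : (diagonal d).PosDef := by
      rw [show diagonal d = LDL.diag hA from rfl, LDL.diag_eq_lowerInv_conj]
      exact hA.mul_mul_conjTranspose_same (vecMul_injective_of_isUnit (isUnit_of_invertible _))
    exact posDef_diagonal_iff.mp this
  -- scale the columns of `W` by `√dᵢ`, with the sign that makes the diagonal positive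
  set c : n → ℝ := fun i => √(d i) * |W i i| / W i i
  have hc : ∀ i, c i * c i = d i := fun i => by
    have := hWdiag i
    simp only [c]
    field_simp
    rw [sq_abs, Real.sq_sqrt (hd i).le, mul_comm]
  refine ⟨W * diagonal c, hW.mul (blockTriangular_diagonal c), fun i => ?_, ?_⟩
  · have := hWdiag i
    have := Real.sqrt_pos.mpr (hd i)
    rw [mul_diagonal]
    simp only [c]
    field_simp
    positivity
  · rw [transpose_mul, diagonal_transpose, mul_assoc, ← mul_assoc (diagonal c),
      diagonal_mul_diagonal, funext hc, ← conjTranspose_eq_transpose_of_trivial, ← mul_assoc]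
    exact LDL.lower_conj_diag hA

theorem PosDef.exists_isLowerTriangular_transpose_mul [WellFoundedGT n]
    [LocallyFiniteOrderTop n] {A : Matrix n n ℝ} (hA : A.PosDef) :
    ∃ L : Matrix n n ℝ, L.IsLowerTriangular ∧ (∀ i, 0 < L i i) ∧ Lᵀ * L = A := by
  obtain ⟨M, hM, hMdiag, hMA⟩ :=
    (hA.submatrix OrderDual.ofDual.injective).exists_isLowerTriangular_mul_transpose
  refine ⟨(M.submatrix OrderDual.toDual OrderDual.toDual)ᵀ, fun i j hij => hM hij,
    fun i => hMdiag _, ?_⟩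
  rw [transpose_transpose, transpose_submatrix, submatrix_mul_equiv, hMA]
  rfl

end Matrix

theorem lowerTriPos_iff {p : ℕ} {L : Matrix (Fin p) (Fin p) ℝ} :
    LowerTriPos L ↔ L.IsLowerTriangular ∧ ∀ i, 0 < L i i :=
  ⟨fun ⟨hL, hdiag⟩ => ⟨fun i j hij => hL i j hij, hdiag⟩,
    fun ⟨hL, hdiag⟩ => ⟨fun _ _ hij => hL hij, hdiag⟩⟩

namespace LowerTriPos

variable {p : ℕ} {L : Matrix (Fin p) (Fin p) ℝ}

theorem det_eq_prod_diag (hL : LowerTriPos L) : L.det = ∏ i, L i i :=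
  det_of_isLowerTriangular L (lowerTriPos_iff.mp hL).1

theorem det_pos (hL : LowerTriPos L) : 0 < L.det :=
  hL.det_eq_prod_diag ▸ Finset.prod_pos fun i _ => hL.2 i

theorem sum_log_diag (hL : LowerTriPos L) :
    ∑ j, Real.log (L j j) = Real.log (Lᵀ * L).det / 2 := by
  rw [det_mul, det_transpose, ← sq, Real.log_pow, hL.det_eq_prod_diag,
    Real.log_prod fun i _ => (hL.2 i).ne']
  ring

theorem posDef_transpose_mul_self (hL : LowerTriPos L) : (Lᵀ * L).PosDef := by
  rw [← conjTranspose_eq_transpose_of_trivial]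
  exact PosDef.conjTranspose_mul_self L (mulVec_injective_of_det_ne_zero hL.det_pos.ne')

end LowerTriPos

theorem image_transpose_mul_self_lowerTriPos (p : ℕ) :
    (fun L => Lᵀ * L) '' {L : Matrix (Fin p) (Fin p) ℝ | LowerTriPos L} = {Ω | Ω.PosDef} := by
  ext Ω
  refine ⟨?_, fun hΩ => ?_⟩
  · rintro ⟨L, hL, rfl⟩
    exact hL.posDef_transpose_mul_self
  · obtain ⟨L, hL, hdiag, rfl⟩ := PosDef.exists_isLowerTriangular_transpose_mul hΩ
    exact ⟨L, lowerTriPos_iff.mpr ⟨hL, hdiag⟩, rfl⟩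

noncomputable def precisionNLL {p : ℕ} (S Ω : Matrix (Fin p) (Fin p) ℝ) : ℝ :=
  (1 / 2) * (S * Ω).trace - Real.log Ω.det / 2

theorem nllScore_permMatrix {p : ℕ} (S : Matrix (Fin p) (Fin p) ℝ) (σ : Equiv.Perm (Fin p))
    {L : Matrix (Fin p) (Fin p) ℝ} (hL : LowerTriPos L) :
    nllScore L (σ.permMatrix ℝ) S = precisionNLL S ((Lᵀ * L).submatrix σ.symm σ.symm) := by
  have htrace : (σ.permMatrix ℝ * S * (σ.permMatrix ℝ)ᵀ * Lᵀ * L).trace =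
      (S * ((σ.permMatrix ℝ)ᵀ * (Lᵀ * L) * σ.permMatrix ℝ)).trace := by
    rw [mul_assoc, mul_assoc, mul_assoc, trace_mul_comm]
    simp only [mul_assoc]
  rw [nllScore, precisionNLL, htrace, transpose_permMatrix_mul_mul_permMatrix,
    det_submatrix_equiv_self, hL.sum_log_diag]

theorem image_nllScore_permMatrix {p : ℕ} (S : Matrix (Fin p) (Fin p) ℝ)
    (σ : Equiv.Perm (Fin p)) :
    (fun L => nllScore L (σ.permMatrix ℝ) S) '' {L | LowerTriPos L} =
      precisionNLL S '' {Ω | Ω.PosDef} := by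
  rw [← image_submatrix_posDef σ.symm, ← image_transpose_mul_self_lowerTriPos, Set.image_image,
    Set.image_image]
  exact Set.image_congr fun L hL => nllScore_permMatrix S σ hL

theorem score_permutation_invariant {p : ℕ}
    (S : Matrix (Fin p) (Fin p) ℝ)
    (σ : Equiv.Perm (Fin p)) :
    sInf ((fun L => nllScore L (σ.permMatrix ℝ) S) ''
        {L : Matrix (Fin p) (Fin p) ℝ | LowerTriPos L}) =
      sInf ((fun L => nllScore L 1 S) ''
        {L : Matrix (Fin p) (Fin p) ℝ | LowerTriPos L}) := by
  simpa using congrArg sInf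
    ((image_nllScore_permMatrix S σ).trans (image_nllScore_permMatrix S 1).symm)
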